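/- arXiv:2408.15506 — 3 statements merged into one kernel-verified Lean document; each statement's English description precedes it below -/
import Mathlib

section
/- Let c_d(n) = n + 1 − 2d. For all integers n ≥ 3 and 2 ≤ d ≤ ⌊n/2⌋ + 1, the real polynomials g_{n,d}(t) satisfy (d−1)(n−d)·c_d(n+2)·g_{n,d}(t) = c_d(n+1)·(c_d(n)·c_d(n+2)·t + (n−d)² + (d−2)² + n − 2)·g_{n,d−1}(t) − (d−2)(n+1−d)·c_d(n)·g_{n,d−2}(t). -/
open Polynomial

/-- Speyer's g-polynomial of the uniform matroid `U_{n,d}` as a real polynomial: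
`g_{n,d}(t) = Σ_{i=1}^{min(d, n-d)} ((n-i-1)! / ((d-i)! (n-d-i)! (i-1)!)) t^i`.
When `d = 0` or `d = n` the sum is empty, so `gPoly n d = 0`, matching the convention. -/
noncomputable def gPoly (n d : ℕ) : Polynomial ℝ :=
  ∑ i ∈ Finset.Icc 1 (min d (n - d)),
    C ((Nat.factorial (n - i - 1) : ℝ) /
        ((Nat.factorial (d - i) : ℝ) * (Nat.factorial (n - d - i) : ℝ) *
          (Nat.factorial (i - 1) : ℝ))) * X ^ i

noncomputable def gc (n d k : ℕ) : ℝ :=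
  ((Nat.factorial (n - k - 1) : ℝ) /
    ((Nat.factorial (d - k) : ℝ) * (Nat.factorial (n - d - k) : ℝ) *
      (Nat.factorial (k - 1) : ℝ)))

lemma coeff_gPoly (n d k : ℕ) :
    (gPoly n d).coeff k = if 1 ≤ k ∧ k ≤ d ∧ k ≤ n - d then gc n d k else 0 := by
  rw [gPoly, Polynomial.finset_sum_coeff]
  simp only [Polynomial.coeff_C_mul, Polynomial.coeff_X_pow, mul_ite, mul_one, mul_zero]
  simp only [show ∀ x : ℕ, (k = x) = (x = k) from fun x => by rw [eq_iff_iff]; exact eq_comm]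
  rw [Finset.sum_ite_eq' (Finset.Icc 1 (min d (n-d))) k]
  simp only [Finset.mem_Icc, le_min_iff, gc]

lemma gc_val (n d j a b : ℕ) (hd : d = j + 1 + a) (hn : n = 2*j + 2 + a + b) :
    gc n d (j+1) = (Nat.factorial (j+a+b) : ℝ) /
      (Nat.factorial a * Nat.factorial b * Nat.factorial j) := by
  subst hd hn; simp only [gc]
  rw [show 2*j+2+a+b - (j+1) - 1 = j+a+b from by omega,
      show j+1+a - (j+1) = a from by omega,
      show 2*j+2+a+b - (j+1+a) - (j+1) = b from by omega,
      show j+1 - 1 = j from by omega]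

set_option maxHeartbeats 2000000 in
/-- With `c_d(n) = n + 1 - 2d`, the recurrence
`(d-1)(n-d) c_d(n+2) g_{n,d} = c_d(n+1)(c_d(n) c_d(n+2) t + (n-d)^2 + (d-2)^2 + n - 2) g_{n,d-1}
  - (d-2)(n+1-d) c_d(n) g_{n,d-2}` for `n ≥ 3` and `2 ≤ d ≤ ⌊n/2⌋ + 1`. -/
theorem gPoly_recurrence_d (n d : ℕ) (hn : 3 ≤ n) (hd : 2 ≤ d) (hd2 : d ≤ n / 2 + 1) :
    C (((d : ℝ) - 1) * ((n : ℝ) - d) * ((n : ℝ) + 3 - 2 * d)) * gPoly n d =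
      C ((n : ℝ) + 2 - 2 * d) *
          (C (((n : ℝ) + 1 - 2 * d) * ((n : ℝ) + 3 - 2 * d)) * X +
            C (((n : ℝ) - d) ^ 2 + ((d : ℝ) - 2) ^ 2 + (n : ℝ) - 2)) *
          gPoly n (d - 1) -
        C (((d : ℝ) - 2) * ((n : ℝ) + 1 - d) * ((n : ℝ) + 1 - 2 * d)) * gPoly n (d - 2) := by
  have h2d : 2*d ≤ n + 2 := by omega
  rw [show C ((n : ℝ) + 2 - 2 * d) *
          (C (((n : ℝ) + 1 - 2 * d) * ((n : ℝ) + 3 - 2 * d)) * X +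
            C (((n : ℝ) - d) ^ 2 + ((d : ℝ) - 2) ^ 2 + (n : ℝ) - 2)) *
          gPoly n (d - 1)
      = C ((n : ℝ) + 2 - 2 * d) * C (((n : ℝ) + 1 - 2 * d) * ((n : ℝ) + 3 - 2 * d)) * (X * gPoly n (d-1))
        + C ((n : ℝ) + 2 - 2 * d) * C (((n : ℝ) - d) ^ 2 + ((d : ℝ) - 2) ^ 2 + (n : ℝ) - 2) * gPoly n (d-1)
      from by ring]
  apply Polynomial.ext; intro k
  simp only [← C_mul]
  cases k with
  | zero => simp [coeff_gPoly, Polynomial.mul_coeff_zero]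
  | succ k =>
    simp only [Polynomial.coeff_sub, Polynomial.coeff_add, Polynomial.coeff_C_mul,
      Polynomial.coeff_X_mul, coeff_gPoly]
    rcases (by omega : (k+1 ≤ d ∧ k+1 ≤ n-d) ∨ (k+1 = d ∧ n-d < k+1) ∨ (k+1 = d-1 ∧ n-d < k+1)
        ∨ (d+1 ≤ k+1)) with hM | ⟨hZ1, hZ1'⟩ | ⟨hZ2, hZ2'⟩ | hT
    · -- main range: k+1 <= d, k+1 <= n-d
      obtain ⟨a, b, hd', hn'⟩ : ∃ a b, d = k+1+a ∧ n = 2*k+2+a+b :=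
        ⟨d-(k+1), n-d-(k+1), by omega, by omega⟩
      split_ifs with h0 h1 h2 h3 <;> try (exfalso; omega)
      · -- k ≥ 1, a ≥ 2 : generic case
        obtain ⟨k1, rfl⟩ : ∃ k1, k = k1 + 1 := ⟨k-1, by omega⟩
        obtain ⟨a2, rfl⟩ : ∃ a2, a = a2 + 2 := ⟨a-2, by omega⟩
        rw [gc_val n d (k1+1) (a2+2) b (by omega) (by omega),
            gc_val n (d-1) k1 (a2+2) (b+2) (by omega) (by omega),
            gc_val n (d-1) (k1+1) (a2+1) (b+1) (by omega) (by omega),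
            gc_val n (d-2) (k1+1) a2 (b+2) (by omega) (by omega),
            show k1+1+(a2+2)+b = k1+a2+b+3 from by omega,
            show k1+(a2+2)+(b+2) = k1+a2+b+4 from by omega,
            show k1+1+(a2+1)+(b+1) = k1+a2+b+3 from by omega,
            show k1+1+a2+(b+2) = k1+a2+b+3 from by omega]
        have F1 : ((Nat.factorial (k1+a2+b+4) : ℝ)) = ((k1:ℝ)+a2+b+4) * Nat.factorial (k1+a2+b+3) := by
          rw [show k1+a2+b+4 = (k1+a2+b+3)+1 from rfl, Nat.factorial_succ]; push_cast; ring
        have F2 : ((Nat.factorial (a2+2) : ℝ)) = ((a2:ℝ)+2)*((a2:ℝ)+1) * Nat.factorial a2 := by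
          rw [show a2+2 = (a2+1)+1 from rfl, Nat.factorial_succ, Nat.factorial_succ]; push_cast; ring
        have F3 : ((Nat.factorial (a2+1) : ℝ)) = ((a2:ℝ)+1) * Nat.factorial a2 := by
          rw [Nat.factorial_succ]; push_cast; ring
        have F4 : ((Nat.factorial (b+2) : ℝ)) = ((b:ℝ)+2)*((b:ℝ)+1) * Nat.factorial b := by
          rw [show b+2 = (b+1)+1 from rfl, Nat.factorial_succ, Nat.factorial_succ]; push_cast; ring
        have F5 : ((Nat.factorial (b+1) : ℝ)) = ((b:ℝ)+1) * Nat.factorial b := by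
          rw [Nat.factorial_succ]; push_cast; ring
        have F6 : ((Nat.factorial (k1+1) : ℝ)) = ((k1:ℝ)+1) * Nat.factorial k1 := by
          rw [Nat.factorial_succ]; push_cast; ring
        have hdr : (d:ℝ) = (k1:ℝ)+(a2:ℝ)+4 := by rw [hd']; push_cast; ring
        have hnr : (n:ℝ) = 2*(k1:ℝ)+(a2:ℝ)+(b:ℝ)+6 := by rw [hn']; push_cast; ring
        rw [hdr, hnr]
        simp only [F1, F2, F3, F4, F5, F6]
        have pF : ((Nat.factorial (k1+a2+b+3) : ℝ)) ≠ 0 := Nat.cast_ne_zero.2 (Nat.factorial_ne_zero _)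
        have pa : ((Nat.factorial a2 : ℝ)) ≠ 0 := Nat.cast_ne_zero.2 (Nat.factorial_ne_zero _)
        have pb : ((Nat.factorial b : ℝ)) ≠ 0 := Nat.cast_ne_zero.2 (Nat.factorial_ne_zero _)
        have pk : ((Nat.factorial k1 : ℝ)) ≠ 0 := Nat.cast_ne_zero.2 (Nat.factorial_ne_zero _)
        have q1 : ((a2:ℝ)+2) ≠ 0 := by positivity
        have q2 : ((a2:ℝ)+1) ≠ 0 := by positivity
        have q3 : ((b:ℝ)+2) ≠ 0 := by positivity
        have q4 : ((b:ℝ)+1) ≠ 0 := by positivity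
        have q5 : ((k1:ℝ)+1) ≠ 0 := by positivity
        field_simp
        ring
      · -- k ≥ 1, a = 1
        obtain ⟨k1, rfl⟩ : ∃ k1, k = k1 + 1 := ⟨k-1, by omega⟩
        obtain rfl : a = 1 := by omega
        rw [gc_val n d (k1+1) 1 b (by omega) (by omega),
            gc_val n (d-1) k1 1 (b+2) (by omega) (by omega),
            gc_val n (d-1) (k1+1) 0 (b+1) (by omega) (by omega),
            show k1+1+1+b = k1+b+2 from by omega,
            show k1+1+(b+2) = k1+b+3 from by omega,
            show k1+1+0+(b+1) = k1+b+2 from by omega]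
        have F1 : ((Nat.factorial (k1+b+3) : ℝ)) = ((k1:ℝ)+b+3) * Nat.factorial (k1+b+2) := by
          rw [show k1+b+3 = (k1+b+2)+1 from rfl, Nat.factorial_succ]; push_cast; ring
        have F4 : ((Nat.factorial (b+2) : ℝ)) = ((b:ℝ)+2)*((b:ℝ)+1) * Nat.factorial b := by
          rw [show b+2 = (b+1)+1 from rfl, Nat.factorial_succ, Nat.factorial_succ]; push_cast; ring
        have F5 : ((Nat.factorial (b+1) : ℝ)) = ((b:ℝ)+1) * Nat.factorial b := by
          rw [Nat.factorial_succ]; push_cast; ring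
        have F6 : ((Nat.factorial (k1+1) : ℝ)) = ((k1:ℝ)+1) * Nat.factorial k1 := by
          rw [Nat.factorial_succ]; push_cast; ring
        have hdr : (d:ℝ) = (k1:ℝ)+3 := by rw [hd']; push_cast; ring
        have hnr : (n:ℝ) = 2*(k1:ℝ)+(b:ℝ)+5 := by rw [hn']; push_cast; ring
        rw [hdr, hnr]
        simp only [F1, F4, F5, F6, Nat.factorial_one, Nat.factorial_zero, Nat.cast_one]
        have pF : ((Nat.factorial (k1+b+2) : ℝ)) ≠ 0 := Nat.cast_ne_zero.2 (Nat.factorial_ne_zero _)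
        have pb : ((Nat.factorial b : ℝ)) ≠ 0 := Nat.cast_ne_zero.2 (Nat.factorial_ne_zero _)
        have pk : ((Nat.factorial k1 : ℝ)) ≠ 0 := Nat.cast_ne_zero.2 (Nat.factorial_ne_zero _)
        have q3 : ((b:ℝ)+2) ≠ 0 := by positivity
        have q4 : ((b:ℝ)+1) ≠ 0 := by positivity
        have q5 : ((k1:ℝ)+1) ≠ 0 := by positivity
        field_simp
        ring
      · -- k ≥ 1, a = 0
        obtain ⟨k1, rfl⟩ : ∃ k1, k = k1 + 1 := ⟨k-1, by omega⟩
        obtain rfl : a = 0 := by omega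
        rw [gc_val n d (k1+1) 0 b (by omega) (by omega),
            gc_val n (d-1) k1 0 (b+2) (by omega) (by omega),
            show k1+1+0+b = k1+b+1 from by omega,
            show k1+0+(b+2) = k1+b+2 from by omega]
        have F1 : ((Nat.factorial (k1+b+2) : ℝ)) = ((k1:ℝ)+b+2) * Nat.factorial (k1+b+1) := by
          rw [show k1+b+2 = (k1+b+1)+1 from rfl, Nat.factorial_succ]; push_cast; ring
        have F4 : ((Nat.factorial (b+2) : ℝ)) = ((b:ℝ)+2)*((b:ℝ)+1) * Nat.factorial b := by
          rw [show b+2 = (b+1)+1 from rfl, Nat.factorial_succ, Nat.factorial_succ]; push_cast; ring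
        have F6 : ((Nat.factorial (k1+1) : ℝ)) = ((k1:ℝ)+1) * Nat.factorial k1 := by
          rw [Nat.factorial_succ]; push_cast; ring
        have hdr : (d:ℝ) = (k1:ℝ)+2 := by rw [hd']; push_cast; ring
        have hnr : (n:ℝ) = 2*(k1:ℝ)+(b:ℝ)+4 := by rw [hn']; push_cast; ring
        rw [hdr, hnr]
        simp only [F1, F4, F6, Nat.factorial_zero, Nat.cast_one]
        have pF : ((Nat.factorial (k1+b+1) : ℝ)) ≠ 0 := Nat.cast_ne_zero.2 (Nat.factorial_ne_zero _)
        have pb : ((Nat.factorial b : ℝ)) ≠ 0 := Nat.cast_ne_zero.2 (Nat.factorial_ne_zero _)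
        have pk : ((Nat.factorial k1 : ℝ)) ≠ 0 := Nat.cast_ne_zero.2 (Nat.factorial_ne_zero _)
        have q3 : ((b:ℝ)+2) ≠ 0 := by positivity
        have q4 : ((b:ℝ)+1) ≠ 0 := by positivity
        have q5 : ((k1:ℝ)+1) ≠ 0 := by positivity
        field_simp
        ring
      · -- k = 0, a ≥ 2
        obtain rfl : k = 0 := by omega
        obtain ⟨a2, rfl⟩ : ∃ a2, a = a2 + 2 := ⟨a-2, by omega⟩
        rw [gc_val n d 0 (a2+2) b (by omega) (by omega),
            gc_val n (d-1) 0 (a2+1) (b+1) (by omega) (by omega),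
            gc_val n (d-2) 0 a2 (b+2) (by omega) (by omega),
            show 0+(a2+2)+b = a2+b+2 from by omega,
            show 0+(a2+1)+(b+1) = a2+b+2 from by omega,
            show 0+a2+(b+2) = a2+b+2 from by omega]
        have F2 : ((Nat.factorial (a2+2) : ℝ)) = ((a2:ℝ)+2)*((a2:ℝ)+1) * Nat.factorial a2 := by
          rw [show a2+2 = (a2+1)+1 from rfl, Nat.factorial_succ, Nat.factorial_succ]; push_cast; ring
        have F3 : ((Nat.factorial (a2+1) : ℝ)) = ((a2:ℝ)+1) * Nat.factorial a2 := by
          rw [Nat.factorial_succ]; push_cast; ring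
        have F4 : ((Nat.factorial (b+2) : ℝ)) = ((b:ℝ)+2)*((b:ℝ)+1) * Nat.factorial b := by
          rw [show b+2 = (b+1)+1 from rfl, Nat.factorial_succ, Nat.factorial_succ]; push_cast; ring
        have F5 : ((Nat.factorial (b+1) : ℝ)) = ((b:ℝ)+1) * Nat.factorial b := by
          rw [Nat.factorial_succ]; push_cast; ring
        have hdr : (d:ℝ) = (a2:ℝ)+3 := by rw [hd']; push_cast; ring
        have hnr : (n:ℝ) = (a2:ℝ)+(b:ℝ)+4 := by rw [hn']; push_cast; ring
        rw [hdr, hnr]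
        simp only [F2, F3, F4, F5, Nat.factorial_zero, Nat.cast_one]
        have pF : ((Nat.factorial (a2+b+2) : ℝ)) ≠ 0 := Nat.cast_ne_zero.2 (Nat.factorial_ne_zero _)
        have pa : ((Nat.factorial a2 : ℝ)) ≠ 0 := Nat.cast_ne_zero.2 (Nat.factorial_ne_zero _)
        have pb : ((Nat.factorial b : ℝ)) ≠ 0 := Nat.cast_ne_zero.2 (Nat.factorial_ne_zero _)
        have q1 : ((a2:ℝ)+2) ≠ 0 := by positivity
        have q2 : ((a2:ℝ)+1) ≠ 0 := by positivity
        have q3 : ((b:ℝ)+2) ≠ 0 := by positivity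
        have q4 : ((b:ℝ)+1) ≠ 0 := by positivity
        field_simp
        ring
      · -- k = 0, a = 1
        obtain rfl : k = 0 := by omega
        obtain rfl : a = 1 := by omega
        rw [gc_val n d 0 1 b (by omega) (by omega),
            gc_val n (d-1) 0 0 (b+1) (by omega) (by omega),
            show 0+1+b = b+1 from by omega,
            show 0+0+(b+1) = b+1 from by omega]
        have F5 : ((Nat.factorial (b+1) : ℝ)) = ((b:ℝ)+1) * Nat.factorial b := by
          rw [Nat.factorial_succ]; push_cast; ring
        have hdr : (d:ℝ) = 2 := by rw [hd']; push_cast; ring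
        have hnr : (n:ℝ) = (b:ℝ)+3 := by rw [hn']; push_cast; ring
        rw [hdr, hnr]
        simp only [F5, Nat.factorial_zero, Nat.factorial_one, Nat.cast_one]
        have pb : ((Nat.factorial b : ℝ)) ≠ 0 := Nat.cast_ne_zero.2 (Nat.factorial_ne_zero _)
        have q4 : ((b:ℝ)+1) ≠ 0 := by positivity
        field_simp
        ring
    · -- k+1 = d, out of range
      rw [if_neg (show ¬(1 ≤ k+1 ∧ k+1 ≤ d ∧ k+1 ≤ n-d) from by omega),
          if_neg (show ¬(1 ≤ k+1 ∧ k+1 ≤ d-1 ∧ k+1 ≤ n-(d-1)) from by omega),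
          if_neg (show ¬(1 ≤ k+1 ∧ k+1 ≤ d-2 ∧ k+1 ≤ n-(d-2)) from by omega)]
      rcases (by omega : 2*d = n+1 ∨ 2*d = n+2) with h | h
      · have hz : (n:ℝ) + 1 - 2*d = 0 := by
          have h' : ((2*d : ℕ):ℝ) = ((n+1 : ℕ):ℝ) := by rw [h]
          push_cast at h'; linarith
        linear_combination (-(((n:ℝ)+2-2*(d:ℝ)) * ((n:ℝ)+3-2*(d:ℝ)) *
          (if 1 ≤ k ∧ k ≤ d-1 ∧ k ≤ n-(d-1) then gc n (d-1) k else 0))) * hz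
      · have hz : (n:ℝ) + 2 - 2*d = 0 := by
          have h' : ((2*d : ℕ):ℝ) = ((n+2 : ℕ):ℝ) := by rw [h]
          push_cast at h'; linarith
        linear_combination (-(((n:ℝ)+1-2*(d:ℝ)) * ((n:ℝ)+3-2*(d:ℝ)) *
          (if 1 ≤ k ∧ k ≤ d-1 ∧ k ≤ n-(d-1) then gc n (d-1) k else 0))) * hz
    · -- k+1 = d-1, out of range (2d = n+2)
      rw [if_neg (show ¬(1 ≤ k+1 ∧ k+1 ≤ d ∧ k+1 ≤ n-d) from by omega),
          if_neg (show ¬(1 ≤ k+1 ∧ k+1 ≤ d-2 ∧ k+1 ≤ n-(d-2)) from by omega)]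
      have h : 2*d = n+2 := by omega
      have hz : (n:ℝ) + 2 - 2*d = 0 := by
        have h' : ((2*d : ℕ):ℝ) = ((n+2 : ℕ):ℝ) := by rw [h]
        push_cast at h'; linarith
      linear_combination (-(((n:ℝ)+1-2*(d:ℝ)) * ((n:ℝ)+3-2*(d:ℝ)) *
          (if 1 ≤ k ∧ k ≤ d-1 ∧ k ≤ n-(d-1) then gc n (d-1) k else 0)
        + (((n:ℝ)-(d:ℝ))^2 + ((d:ℝ)-2)^2 + (n:ℝ) - 2) *
          (if 1 ≤ k+1 ∧ k+1 ≤ d-1 ∧ k+1 ≤ n-(d-1) then gc n (d-1) (k+1) else 0))) * hz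
    · -- k+1 > d : everything vanishes
      rw [if_neg (show ¬(1 ≤ k+1 ∧ k+1 ≤ d ∧ k+1 ≤ n-d) from by omega),
          if_neg (show ¬(1 ≤ k ∧ k ≤ d-1 ∧ k ≤ n-(d-1)) from by omega),
          if_neg (show ¬(1 ≤ k+1 ∧ k+1 ≤ d-1 ∧ k+1 ≤ n-(d-1)) from by omega),
          if_neg (show ¬(1 ≤ k+1 ∧ k+1 ≤ d-2 ∧ k+1 ≤ n-(d-2)) from by omega)]
      ring
end

section
/- For every integer d ≥ 1, the real polynomials g_{n,d}(t) satisfy d·g_{2d+2,d+1}(t) = (t+2)(2d−1)·g_{2d,d}(t) − (d−1)·t²·g_{2d−2,d−1}(t), with the convention g_{0,0}(t) = 0. -/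
open Polynomial

noncomputable def B (d k : ℕ) : ℝ := if 1 ≤ k ∧ k ≤ d then
    (Nat.factorial (2 * d - k - 1) : ℝ) /
      ((Nat.factorial (d - k) : ℝ) * (Nat.factorial (d - k) : ℝ) *
        (Nat.factorial (k - 1) : ℝ)) else 0

lemma B_eq (d k : ℕ) (h1 : 1 ≤ k) (h2 : k ≤ d) :
    B d k = (Nat.factorial (2 * d - k - 1) : ℝ) /
      ((Nat.factorial (d - k) : ℝ) * (Nat.factorial (d - k) : ℝ) *
        (Nat.factorial (k - 1) : ℝ)) := if_pos ⟨h1, h2⟩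

lemma B_zero {d k : ℕ} (h : ¬(1 ≤ k ∧ k ≤ d)) : B d k = 0 := if_neg h

lemma castfac (n : ℕ) : ((Nat.factorial n : ℝ)) ≠ 0 :=
  Nat.cast_ne_zero.mpr (Nat.factorial_ne_zero n)

lemma hp1 : ∀ n : ℕ, (Nat.factorial (n+1) : ℝ) = ((n:ℝ)+1) * (Nat.factorial n : ℝ) := by
  intro n; rw [Nat.factorial_succ]; push_cast; ring

lemma key (d k : ℕ) (hd : 1 ≤ d) :
    (d:ℝ) * B (d+1) k =
      (2*(d:ℝ)-1) * ((if k = 0 then 0 else B d (k-1)) + 2 * B d k) -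
        ((d:ℝ)-1) * (if 2 ≤ k then B (d-1) (k-2) else 0) := by
  match k with
  | 0 => simp [B]
  | 1 =>
    obtain ⟨p, rfl⟩ : ∃ p, d = p + 1 := ⟨d - 1, by omega⟩
    rw [if_neg (by omega : ¬(1:ℕ) = 0), if_neg (by omega : ¬2 ≤ 1)]
    rw [show (1:ℕ) - 1 = 0 from rfl, B_zero (by omega : ¬(1 ≤ 0 ∧ 0 ≤ p+1)),
      B_eq (p+1+1) 1 (by omega) (by omega), B_eq (p+1) 1 (by omega) (by omega)]
    simp only [show 2*(p+1+1)-1-1 = 2*p+1+1 from by omega, show p+1+1-1 = p+1 from rfl,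
      show 2*(p+1)-1-1 = 2*p from by omega, show p+1-1 = p from rfl, Nat.factorial_zero,
      show (1:ℕ)-1 = 0 from rfl]
    rw [hp1 (2*p+1), hp1 (2*p), hp1 p]
    have n1 : ((p:ℝ)+1) ≠ 0 := by positivity
    have n4 := castfac p; have n5 := castfac (2*p)
    push_cast
    field_simp
    ring
  | 2 =>
    rw [if_neg (by omega : ¬(2:ℕ) = 0), if_pos (by omega : 2 ≤ 2),
      show (2:ℕ) - 1 = 1 from rfl, show (2:ℕ) - 2 = 0 from rfl,
      B_zero (by omega : ¬(1 ≤ 0 ∧ 0 ≤ d-1))]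
    match d, hd with
    | 1, _ => norm_num [B, Nat.factorial]
    | (p+2), _ =>
      rw [B_eq (p+2+1) 2 (by omega) (by omega), B_eq (p+2) 1 (by omega) (by omega),
        B_eq (p+2) 2 (by omega) (by omega)]
      simp only [show 2*(p+2+1)-2-1 = 2*p+2+1 from by omega, show p+2+1-2 = p+1 from rfl,
        show 2*(p+2)-1-1 = 2*p+1+1 from by omega, show p+2-1 = p+1 from rfl,
        show 2*(p+2)-2-1 = 2*p+1 from by omega, show p+2-2 = p from rfl,
        show (2:ℕ)-1 = 1 from rfl, show (1:ℕ)-1 = 0 from rfl, Nat.factorial_zero,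
        Nat.factorial_one]
      rw [hp1 (2*p+2), hp1 (2*p+1), hp1 (2*p), hp1 p]
      have n1 : ((p:ℝ)+1) ≠ 0 := by positivity
      have n2 : ((p:ℝ)+2) ≠ 0 := by positivity
      have n4 := castfac p; have n5 := castfac (2*p)
      push_cast
      field_simp
      ring
  | (q+3) =>
    rw [if_neg (by omega : ¬q+3 = 0), if_pos (by omega : 2 ≤ q+3),
      show q+3-1 = q+2 from rfl, show q+3-2 = q+1 from rfl]
    rcases Nat.lt_or_ge d (q+3) with hlt | hge
    · rcases Nat.lt_or_ge d (q+2) with hlt2 | hge2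
      · -- k ≥ d+2 : everything vanishes
        rw [B_zero (by omega : ¬(1 ≤ q+3 ∧ q+3 ≤ d+1)),
          B_zero (by omega : ¬(1 ≤ q+2 ∧ q+2 ≤ d)),
          B_zero (by omega : ¬(1 ≤ q+3 ∧ q+3 ≤ d)),
          B_zero (by omega : ¬(1 ≤ q+1 ∧ q+1 ≤ d-1))]
        ring
      · -- k = d+1, i.e. d = q+2
        obtain rfl : d = q + 2 := by omega
        rw [show q+2-1 = q+1 from rfl,
          B_eq (q+2+1) (q+3) (by omega) (by omega),
          B_eq (q+2) (q+2) (by omega) (by omega),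
          B_zero (by omega : ¬(1 ≤ q+3 ∧ q+3 ≤ q+2)),
          B_eq (q+1) (q+1) (by omega) (by omega)]
        simp only [show 2*(q+2+1)-(q+3)-1 = q+2 from by omega, show q+2+1-(q+3) = 0 from by omega,
          show q+3-1 = q+2 from rfl,
          show 2*(q+2)-(q+2)-1 = q+1 from by omega, show q+2-(q+2) = 0 from by omega,
          show q+2-1 = q+1 from rfl,
          show 2*(q+1)-(q+1)-1 = q from by omega, show q+1-(q+1) = 0 from by omega,
          show q+1-1 = q from rfl, Nat.factorial_zero]
        have n1 := castfac q; have n2 := castfac (q+1); have n3 := castfac (q+2)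
        push_cast
        field_simp
        ring
    · -- interior: 3 ≤ k ≤ d
      obtain ⟨p, rfl⟩ : ∃ p, d = p + (q+3) := ⟨d - (q+3), by omega⟩
      rw [B_eq (p+(q+3)+1) (q+3) (by omega) (by omega),
        B_eq (p+(q+3)) (q+2) (by omega) (by omega),
        B_eq (p+(q+3)) (q+3) (by omega) (by omega),
        B_eq (p+(q+3)-1) (q+1) (by omega) (by omega)]
      simp only [show 2*(p+(q+3)+1)-(q+3)-1 = 2*p+q+4 from by omega,
        show p+(q+3)+1-(q+3) = p+1 from by omega, show q+3-1 = q+2 from rfl,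
        show 2*(p+(q+3))-(q+2)-1 = 2*p+q+3 from by omega,
        show p+(q+3)-(q+2) = p+1 from by omega, show q+2-1 = q+1 from rfl,
        show 2*(p+(q+3))-(q+3)-1 = 2*p+q+2 from by omega,
        show p+(q+3)-(q+3) = p from by omega,
        show 2*(p+(q+3)-1)-(q+1)-1 = 2*p+q+2 from by omega,
        show p+(q+3)-1-(q+1) = p+1 from by omega, show q+1-1 = q from rfl]
      have h4 : (Nat.factorial (2*p+q+4) : ℝ)
          = (2*(p:ℝ)+q+4) * ((2*(p:ℝ)+q+3) * (Nat.factorial (2*p+q+2) : ℝ)) := by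
        rw [show 2*p+q+4 = (2*p+q+2)+1+1 from rfl, Nat.factorial_succ, Nat.factorial_succ]
        push_cast; ring
      have h3 : (Nat.factorial (2*p+q+3) : ℝ)
          = (2*(p:ℝ)+q+3) * (Nat.factorial (2*p+q+2) : ℝ) := by
        rw [show 2*p+q+3 = (2*p+q+2)+1 from rfl, Nat.factorial_succ]
        push_cast; ring
      rw [h4, h3, hp1 (q+1), hp1 q, hp1 p]
      have n1 : ((p:ℝ)+1) ≠ 0 := by positivity
      have n2 : ((q:ℝ)+1) ≠ 0 := by positivity
      have n4 := castfac p
      have n5 := castfac q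
      have n6 := castfac (2*p+q+2)
      push_cast
      field_simp
      ring

lemma coeffB (d k : ℕ) : (gPoly (2 * d) d).coeff k = B d k := by
  have h : 2 * d - d = d := by omega
  unfold gPoly B
  rw [h, min_self, finset_sum_coeff]
  simp only [coeff_C_mul, coeff_X_pow, mul_ite, mul_one, mul_zero]
  rw [Finset.sum_ite_eq (Finset.Icc 1 d) k]
  simp [Finset.mem_Icc]

/-- `d g_{2d+2,d+1}(t) = (t+2)(2d-1) g_{2d,d}(t) - (d-1) t^2 g_{2d-2,d-1}(t)` for `d ≥ 1`,
with the convention `g_{0,0}(t) = 0`. -/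
theorem gPoly_recurrence_diag₁ (d : ℕ) (hd : 1 ≤ d) :
    C (d : ℝ) * gPoly (2 * d + 2) (d + 1) =
      (X + 2) * C (2 * (d : ℝ) - 1) * gPoly (2 * d) d -
        C ((d : ℝ) - 1) * X ^ 2 * gPoly (2 * d - 2) (d - 1) := by
  have h2 : 2 * d + 2 = 2 * (d + 1) := by ring
  have h0 : 2 * d - 2 = 2 * (d - 1) := by omega
  rw [h2, h0]
  set G := gPoly (2 * d) d with hG
  set G' := gPoly (2 * (d - 1)) (d - 1) with hG'
  have e1 : (X + 2) * C (2 * (d : ℝ) - 1) * G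
      = C (2 * (d : ℝ) - 1) * (X * G) + C (2 * (2 * (d : ℝ) - 1)) * G := by
    rw [C_mul]
    have : (C (2:ℝ)) = (2 : ℝ[X]) := map_ofNat C 2
    rw [this]; ring
  have e2 : C ((d : ℝ) - 1) * X ^ 2 * G' = C ((d : ℝ) - 1) * (X ^ 2 * G') := by ring
  rw [e1, e2]
  ext k
  simp only [coeff_sub, coeff_add, coeff_C_mul]
  match k with
  | 0 =>
    rw [mul_coeff_zero, mul_coeff_zero, coeff_X_zero, coeff_X_pow]
    rw [coeffB (d+1) 0, coeffB d 0, B_zero (by omega : ¬(1 ≤ 0 ∧ 0 ≤ d+1)),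
      B_zero (by omega : ¬(1 ≤ 0 ∧ 0 ≤ d))]
    norm_num
  | 1 =>
    have hx2 : (X ^ 2 * G').coeff 1 = 0 := by
      rw [pow_two, mul_assoc, coeff_X_mul, mul_coeff_zero, coeff_X_zero, zero_mul]
    rw [coeff_X_mul, hx2, coeffB (d+1) 1, coeffB d 0, coeffB d 1,
      B_zero (by omega : ¬(1 ≤ 0 ∧ 0 ≤ d))]
    have hk := key d 1 hd
    rw [if_neg (by omega : ¬(1:ℕ) = 0), if_neg (by omega : ¬2 ≤ 1),
      show (1:ℕ) - 1 = 0 from rfl, B_zero (by omega : ¬(1 ≤ 0 ∧ 0 ≤ d))] at hk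
    rw [mul_zero]
    linear_combination hk
  | (m+2) =>
    have hx2 : (X ^ 2 * G').coeff (m+2) = G'.coeff m := by
      rw [show m+2 = m+2 from rfl]
      exact coeff_X_pow_mul G' 2 m
    rw [show m+2 = m+1+1 from rfl, coeff_X_mul, show m+1+1 = m+2 from rfl, hx2,
      coeffB (d+1) (m+2), coeffB d (m+1), coeffB d (m+2), coeffB (d-1) m]
    have hk := key d (m+2) hd
    rw [if_neg (by omega : ¬m+2 = 0), if_pos (by omega : 2 ≤ m+2),
      show m+2-1 = m+1 from rfl, show m+2-2 = m from rfl] at hk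
    linear_combination hk
end

section
/- For every integer d ≥ 2, the real polynomials g_{n,d}(t) satisfy the differential recurrence (d·t + 1)·g_{2d,d}(t) = (d−1)·t·g_{2d−1,d−1}(t) + t(t+1)·g'_{2d,d}(t), where g' denotes the derivative with respect to t. -/
open Polynomial

/-- coefficient `a_{j+1}` of `g_{2d,d}` -/
noncomputable def aC (d j : ℕ) : ℝ :=
  (Nat.factorial (2*d - j - 2) : ℝ) /
    ((Nat.factorial (d - j - 1) : ℝ) * (Nat.factorial (d - j - 1) : ℝ) *
      (Nat.factorial j : ℝ))

/-- coefficient `b_{j+1}` of `g_{2d-1,d-1}` -/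
noncomputable def bC (d j : ℕ) : ℝ :=
  (Nat.factorial (2*d - j - 3) : ℝ) /
    ((Nat.factorial (d - j - 2) : ℝ) * (Nat.factorial (d - j - 1) : ℝ) *
      (Nat.factorial j : ℝ))

lemma gA (d : ℕ) : gPoly (2*d) d = ∑ j ∈ Finset.range d, C (aC d j) * X^(j+1) := by
  unfold gPoly
  rw [show min d (2*d - d) = d by omega, ← Finset.Ico_add_one_right_eq_Icc,
    Finset.sum_Ico_eq_sum_range]
  rw [show d + 1 - 1 = d from rfl]
  refine Finset.sum_congr rfl fun j hj => ?_
  unfold aC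
  rw [show 2*d - (1+j) - 1 = 2*d - j - 2 by omega, show d - (1+j) = d - j - 1 by omega,
    show 2*d - d - (1+j) = d - j - 1 by omega, show 1 + j - 1 = j by omega,
    show 1 + j = j + 1 by omega]

lemma gB (d : ℕ) (hd : 1 ≤ d) :
    gPoly (2*d - 1) (d-1) = ∑ j ∈ Finset.range (d-1), C (bC d j) * X^(j+1) := by
  unfold gPoly
  rw [show min (d-1) (2*d - 1 - (d-1)) = d - 1 by omega, ← Finset.Ico_add_one_right_eq_Icc,
    Finset.sum_Ico_eq_sum_range, show d - 1 + 1 - 1 = d - 1 by omega]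
  refine Finset.sum_congr rfl fun j hj => ?_
  simp only [Finset.mem_range] at hj
  unfold bC
  rw [show 2*d - 1 - (1+j) - 1 = 2*d - j - 3 by omega,
    show d - 1 - (1+j) = d - j - 2 by omega,
    show 2*d - 1 - (d-1) - (1+j) = d - j - 1 by omega,
    show 1 + j - 1 = j by omega, show 1 + j = j + 1 by omega]

lemma factNZ (n : ℕ) : (Nat.factorial n : ℝ) ≠ 0 := by
  exact_mod_cast Nat.factorial_ne_zero n

/-- key coefficient identity -/
lemma key_s10 (q r : ℕ) :
    ((q:ℝ)+1) * ((Nat.factorial (2*q+r+2) : ℝ) /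
        ((Nat.factorial (q+1) : ℝ) * (Nat.factorial (q+1) : ℝ) * (Nat.factorial r : ℝ)))
      - ((r:ℝ)+1) * ((Nat.factorial (2*q+r+1) : ℝ) /
        ((Nat.factorial q : ℝ) * (Nat.factorial q : ℝ) * (Nat.factorial (r+1) : ℝ)))
    = ((q:ℝ)+(r:ℝ)+1) * ((Nat.factorial (2*q+r+1) : ℝ) /
        ((Nat.factorial q : ℝ) * (Nat.factorial (q+1) : ℝ) * (Nat.factorial r : ℝ))) := by
  rw [show 2*q+r+2 = (2*q+r+1)+1 by omega]
  rw [Nat.factorial_succ (2*q+r+1), Nat.factorial_succ q, Nat.factorial_succ r]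
  push_cast
  have h1 := factNZ q
  have h2 := factNZ r
  have h3 : (q:ℝ) + 1 ≠ 0 := by positivity
  have h4 : (r:ℝ) + 1 ≠ 0 := by positivity
  field_simp
  ring

/-- Differential recurrence
`(d t + 1) g_{2d,d}(t) = (d-1) t g_{2d-1,d-1}(t) + t(t+1) g'_{2d,d}(t)` for `d ≥ 2`. -/
theorem gPoly_diff_recurrence_diag₁ (d : ℕ) (hd : 2 ≤ d) :
    (C (d : ℝ) * X + 1) * gPoly (2 * d) d =
      C ((d : ℝ) - 1) * X * gPoly (2 * d - 1) (d - 1) +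
        X * (X + 1) * derivative (gPoly (2 * d) d) := by
  rw [gA, gB d (by omega)]
  rw [derivative_sum]
  simp only [derivative_C_mul_X_pow]
  have hder : ∀ j ∈ Finset.range d,
      C (aC d j * ((j + 1 : ℕ) : ℝ)) * X ^ (j + 1 - 1)
        = C (((j:ℝ)+1) * aC d j) * X ^ j := by
    intro j _
    rw [Nat.add_sub_cancel]
    push_cast
    rw [mul_comm (aC d j)]
  rw [Finset.sum_congr rfl hder]
  -- expand all products into sums
  rw [add_mul, one_mul, Finset.mul_sum, Finset.mul_sum, Finset.mul_sum]
  have e0 : ∀ j ∈ Finset.range d,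
      C (d:ℝ) * X * (C (aC d j) * X ^ (j+1)) = C ((d:ℝ) * aC d j) * X ^ (j+2) := by
    intro j _; rw [C_mul]; ring
  have e1 : ∀ j ∈ Finset.range (d-1),
      C ((d:ℝ)-1) * X * (C (bC d j) * X ^ (j+1)) = C (((d:ℝ)-1) * bC d j) * X ^ (j+2) := by
    intro j _; rw [C_mul]; ring
  have e2 : ∀ j ∈ Finset.range d,
      X * (X + 1) * (C (((j:ℝ)+1) * aC d j) * X ^ j)
        = C (((j:ℝ)+1) * aC d j) * X ^ (j+2) + C (((j:ℝ)+1) * aC d j) * X ^ (j+1) := by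
    intro j _; ring
  rw [Finset.sum_congr rfl e0, Finset.sum_congr rfl e1, Finset.sum_congr rfl e2,
    Finset.sum_add_distrib]
  -- goal: S0 + S1 = T + (S2a + S2b)
  rw [← sub_eq_iff_eq_add]
  have rearr : ∀ P Q R S : Polynomial ℝ, P + Q - (R + S) = (P - R) + (Q - S) := by
    intro P Q R S; ring
  rw [rearr, ← Finset.sum_sub_distrib, ← Finset.sum_sub_distrib]
  have e3 : ∀ j ∈ Finset.range d,
      C ((d:ℝ) * aC d j) * X ^ (j+2) - C (((j:ℝ)+1) * aC d j) * X ^ (j+2)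
        = C (((d:ℝ) - ((j:ℝ)+1)) * aC d j) * X ^ (j+2) := by
    intro j _; rw [← sub_mul, ← C_sub, ← sub_mul]
  have e4 : ∀ j ∈ Finset.range d,
      C (aC d j) * X ^ (j+1) - C (((j:ℝ)+1) * aC d j) * X ^ (j+1)
        = C ((1 - ((j:ℝ)+1)) * aC d j) * X ^ (j+1) := by
    intro j _; rw [← sub_mul, ← C_sub]; congr 1; ring
  rw [Finset.sum_congr rfl e3, Finset.sum_congr rfl e4]
  -- split off extreme terms
  obtain ⟨e, rfl⟩ : ∃ e, d = e + 1 := ⟨d - 1, by omega⟩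
  rw [show e + 1 - 1 = e from rfl]
  rw [Finset.sum_range_succ, Finset.sum_range_succ']
  have z1 : (((e+1:ℕ):ℝ) - ((e:ℝ)+1)) * aC (e+1) e = 0 := by
    push_cast; ring
  have z2 : (1 - (((0:ℕ):ℝ)+1)) * aC (e+1) 0 = 0 := by
    push_cast; ring
  rw [z1, z2, C_0, zero_mul, zero_mul, add_zero, add_zero, ← Finset.sum_add_distrib]
  refine Finset.sum_congr rfl fun j hj => ?_
  simp only [Finset.mem_range] at hj
  rw [← add_mul, ← C_add]
  congr 1
  obtain ⟨q, rfl⟩ : ∃ q, e = q + j + 1 := ⟨e - j - 1, by omega⟩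
  simp only [aC, bC]
  rw [show 2*(q+j+1+1) - j - 2 = 2*q+j+2 by omega,
    show 2*(q+j+1+1) - (j+1) - 2 = 2*q+j+1 by omega,
    show (q+j+1+1) - (j+1) - 1 = q by omega,
    show 2*(q+j+1+1) - j - 3 = 2*q+j+1 by omega,
    show (q+j+1+1) - j - 2 = q by omega,
    show (q+j+1+1) - j - 1 = q + 1 by omega]
  apply congrArg
  have hk := key_s10 q j
  push_cast at hk ⊢
  linear_combination hk
end
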